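/- arXiv:2112.08953 — 2 statements merged into one kernel-verified Lean document; each statement's English description precedes it below -/
import Mathlib

section
/- Let G be a trigraph containing a fence gadget F (with bipartition (A, B)) attached to a set S and satisfying the attachment rule in G. Consider a partial contraction sequence from G and its first contraction that involves a pair of vertices of V(F) (so before this contraction every vertex of V(F) lies in its own part). If this contraction involves some a_i ∈ A and some b_j ∈ B, then the created vertex has red edges to at least 3 distinct parts containing vertices of V(F). -/
/-- A *trigraph*: a vertex set with disjoint sets of black edges and red edges. -/
structure Trigraph (V : Type) where
  black : SimpleGraph V
  red : SimpleGraph V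
  disj : ∀ u v : V, black.Adj u v → ¬ red.Adj u v

namespace Trigraph

variable {V W : Type}

/-- Adjacency in the total graph of a trigraph. -/
def TotAdj (G : Trigraph V) (u v : V) : Prop :=
  G.black.Adj u v ∨ G.red.Adj u v

theorem totAdj_symm (G : Trigraph V) {u v : V} (h : G.TotAdj u v) : G.TotAdj v u :=
  Or.imp (fun h' => h'.symm) (fun h' => h'.symm) h

/-- The trigraph associated with a partition (setoid) of the vertex set of `G`:
two distinct parts are joined by a black edge if every pair between them is a black
edge of `G`, and by a red edge if some pair between them is (black or red) adjacent
but not every pair is a black edge. This is the trigraph obtained by contracting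
every part of the partition. -/
def quot (G : Trigraph V) (P : Setoid V) : Trigraph (Quotient P) where
  black :=
    { Adj := fun XX YY => XX ≠ YY ∧
        ∀ a b : V, Quotient.mk P a = XX → Quotient.mk P b = YY → G.black.Adj a b
      symm := ⟨fun XX YY h => ⟨h.1.symm, fun a b ha hb => (h.2 b a hb ha).symm⟩⟩
      loopless := ⟨fun XX h => h.1 rfl⟩ }
  red :=
    { Adj := fun XX YY => XX ≠ YY ∧
        (¬ ∀ a b : V, Quotient.mk P a = XX → Quotient.mk P b = YY → G.black.Adj a b) ∧
        ∃ a b : V, Quotient.mk P a = XX ∧ Quotient.mk P b = YY ∧ G.TotAdj a b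
      symm := ⟨fun XX YY h => ⟨h.1.symm,
        fun hc => h.2.1 (fun a b ha hb => (hc b a hb ha).symm), by
          obtain ⟨a, b2, ha, hb, hab⟩ := h.2.2
          exact ⟨b2, a, hb, ha, totAdj_symm G hab⟩⟩⟩
      loopless := ⟨fun XX h => h.1 rfl⟩ }
  disj := fun XX YY hb hr => hr.2.1 hb.2

/-- The setoid obtained from `P` by merging the classes of `u` and `v`. -/
def mergeSetoid (P : Setoid V) (u v : V) : Setoid V where
  r a b := P.r a b ∨ (P.r a u ∧ P.r v b) ∨ (P.r a v ∧ P.r u b)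
  iseqv := by
    constructor
    · exact fun a => Or.inl (P.iseqv.refl a)
    · rintro a b (h | ⟨h1, h2⟩ | ⟨h1, h2⟩)
      · exact Or.inl (P.iseqv.symm h)
      · exact Or.inr (Or.inr ⟨P.iseqv.symm h2, P.iseqv.symm h1⟩)
      · exact Or.inr (Or.inl ⟨P.iseqv.symm h2, P.iseqv.symm h1⟩)
    · rintro a b c (h | ⟨h1, h2⟩ | ⟨h1, h2⟩) (g | ⟨g1, g2⟩ | ⟨g1, g2⟩)
      · exact Or.inl (P.iseqv.trans h g)
      · exact Or.inr (Or.inl ⟨P.iseqv.trans h g1, g2⟩)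
      · exact Or.inr (Or.inr ⟨P.iseqv.trans h g1, g2⟩)
      · exact Or.inr (Or.inl ⟨h1, P.iseqv.trans h2 g⟩)
      · exact Or.inl (P.iseqv.trans h1
          (P.iseqv.trans (P.iseqv.symm (P.iseqv.trans h2 g1)) g2))
      · exact Or.inl (P.iseqv.trans h1 g2)
      · exact Or.inr (Or.inr ⟨h1, P.iseqv.trans h2 g⟩)
      · exact Or.inl (P.iseqv.trans h1 g2)
      · exact Or.inl (P.iseqv.trans h1
          (P.iseqv.trans (P.iseqv.symm (P.iseqv.trans h2 g1)) g2))

/-- `Q` is obtained from `P` by merging two distinct parts. -/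
def MergeStep (P Q : Setoid V) : Prop :=
  ∃ u v : V, ¬ P.r u v ∧ Q = mergeSetoid P u v

/-- The trigraph `G` has red degree at most `d`. -/
def RedDegLE (G : Trigraph V) (d : ℕ) : Prop :=
  ∀ x : V, (G.red.neighborSet x).ncard ≤ d

/-- A partial contraction sequence, recorded as the list of successive partitions of
the vertex set: it starts at the discrete partition and each partition is obtained
from the previous one by merging two parts (i.e. by one contraction). -/
def IsPartialContractionSeq (L : List (Setoid V)) : Prop :=
  L.head? = some ⊥ ∧ L.Chain' MergeStep

/-- A partial `d`-sequence of the trigraph `G`: a partial contraction sequence all of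
whose associated trigraphs have red degree at most `d`. -/
def IsPartialSeq (G : Trigraph V) (d : ℕ) (L : List (Setoid V)) : Prop :=
  IsPartialContractionSeq L ∧ ∀ P ∈ L, (G.quot P).RedDegLE d

/-- A (complete) `d`-sequence of the trigraph `G`: a partial `d`-sequence ending at
the one-vertex trigraph, i.e. at the partition with a single part. -/
def IsSeq (G : Trigraph V) (d : ℕ) (L : List (Setoid V)) : Prop :=
  G.IsPartialSeq d L ∧ L.getLast? = some ⊤

/-- `G` admits a `d`-sequence. -/
def HasSeq (G : Trigraph V) (d : ℕ) : Prop := ∃ L, G.IsSeq d L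

/-- The twin-width of a trigraph: the least `d` such that it admits a `d`-sequence. -/
noncomputable def tww (G : Trigraph V) : ℕ := sInf {d | G.HasSeq d}

/-- The induced subtrigraph on a set of vertices. -/
def induce (G : Trigraph V) (W : Set V) : Trigraph W where
  black := SimpleGraph.induce W G.black
  red := SimpleGraph.induce W G.red
  disj := fun u v hb hr => G.disj u v hb hr

/-- An isomorphism of trigraphs: a vertex bijection preserving black edges, red
edges, and non-edges. -/
structure Iso (G : Trigraph V) (H : Trigraph W) where
  toEquiv : V ≃ W
  black_iff : ∀ a b : V, H.black.Adj (toEquiv a) (toEquiv b) ↔ G.black.Adj a b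
  red_iff : ∀ a b : V, H.red.Adj (toEquiv a) (toEquiv b) ↔ G.red.Adj a b

/-- A graph, viewed as a trigraph with no red edges. -/
def ofGraph (G : SimpleGraph V) : Trigraph V :=
  ⟨G, ⊥, fun _ _ _ h => h⟩

end Trigraph

open Trigraph

/-- The 12 vertices of a fence gadget with sides `a` (for `A = {a_1, …, a_6}`)
and `b` (for `B = {b_1, …, b_6}`), indexed by `Fin 6` (so `a 0` is `a_1`, …). -/
def fenceSet {V : Type} (a b : Fin 6 → V) : Set V := Set.range a ∪ Set.range b

/-- The fence gadget with sides `a`, `b` is attached to the set `S` in the trigraph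
`G` and satisfies the attachment rule there, with associated set `X`.
Its black edges are the two 6-cycles on `A` and on `B` together with the edge
`b_1 a_6`; its red edges are `a_i b_i` (`i ∈ [6]`) and `a_i b_{i+1}` (`i ∈ [5]`);
the 12 fence vertices form a connected component of the red graph of `G`; every
vertex of `A` has (black) neighborhood `X ∪ S` outside the fence, every vertex of
`B` has (black) neighborhood `X` outside the fence, and every vertex of `X` is
(black-)adjacent to all of `S`. -/
structure FenceAttached {V : Type} (G : Trigraph V) (a b : Fin 6 → V)
    (S X : Set V) : Prop where
  a_inj : Function.Injective a
  b_inj : Function.Injective b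
  ab_ne : ∀ i j : Fin 6, a i ≠ b j
  S_nonempty : S.Nonempty
  S_disj : ∀ z ∈ S, z ∉ fenceSet a b
  X_disj : ∀ z ∈ X, z ∉ fenceSet a b ∪ S
  black_aa : ∀ i j : Fin 6, G.black.Adj (a i) (a j) ↔ (j = i + 1 ∨ i = j + 1)
  black_bb : ∀ i j : Fin 6, G.black.Adj (b i) (b j) ↔ (j = i + 1 ∨ i = j + 1)
  black_ab : ∀ i j : Fin 6, G.black.Adj (a i) (b j) ↔ (i = 5 ∧ j = 0)
  red_aa : ∀ i j : Fin 6, ¬ G.red.Adj (a i) (a j)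
  red_bb : ∀ i j : Fin 6, ¬ G.red.Adj (b i) (b j)
  red_ab : ∀ i j : Fin 6, G.red.Adj (a i) (b j) ↔ (j = i ∨ (j : ℕ) = (i : ℕ) + 1)
  red_closed : ∀ x ∈ fenceSet a b, ∀ y : V, G.red.Adj x y → y ∈ fenceSet a b
  black_a_out : ∀ (i : Fin 6) (z : V), z ∉ fenceSet a b →
      (G.black.Adj (a i) z ↔ z ∈ X ∪ S)
  black_b_out : ∀ (i : Fin 6) (z : V), z ∉ fenceSet a b →
      (G.black.Adj (b i) z ↔ z ∈ X)
  X_black_S : ∀ x ∈ X, ∀ z ∈ S, G.black.Adj x z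

/-!
Merging `a_i` with `b_j` creates a red edge to every fence vertex `z ∉ {a_i, b_j}` that is
adjacent to at least one of them and not black-adjacent to at least one of them. A finite check
over the fence shows that, whatever `i` and `j` are, at least three such `z` exist, and since no
part contains two fence vertices yet, these three `z` lie in distinct parts after the merge.
-/

namespace Trigraph

variable {V : Type}

theorem mk_mergeSetoid_ne {P : Setoid V} {u v z w : V} (hzw : ¬ P.r z w) (huw : ¬ P.r u w)
    (hvw : ¬ P.r v w) :
    Quotient.mk (mergeSetoid P u v) z ≠ Quotient.mk (mergeSetoid P u v) w := fun h => by
  rcases Quotient.exact h with h | ⟨-, h⟩ | ⟨-, h⟩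
  exacts [hzw h, hvw h, huw h]

theorem quot_mergeSetoid_red_adj (G : Trigraph V) {P : Setoid V} {u v z : V}
    (huz : ¬ P.r u z) (hvz : ¬ P.r v z) (hadj : G.TotAdj u z ∨ G.TotAdj v z)
    (hnblack : ¬ G.black.Adj u z ∨ ¬ G.black.Adj v z) :
    (G.quot (mergeSetoid P u v)).red.Adj
      (Quotient.mk (mergeSetoid P u v) u) (Quotient.mk (mergeSetoid P u v) z) := by
  have hvu : Quotient.mk (mergeSetoid P u v) v = Quotient.mk (mergeSetoid P u v) u :=
    Quotient.sound (Or.inr (Or.inr ⟨P.refl v, P.refl u⟩))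
  refine ⟨mk_mergeSetoid_ne huz huz hvz, fun hall => ?_, ?_⟩
  · rcases hnblack with h | h
    exacts [h (hall u z rfl rfl), h (hall v z hvu rfl)]
  · rcases hadj with h | h
    exacts [⟨u, z, rfl, rfl, h⟩, ⟨v, z, hvu, rfl, h⟩]

end Trigraph

open Sum

/-- The fence gadget on `Fin 6 ⊕ Fin 6`, with `inl i` standing for `a i` and `inr j` for
`b j`. -/
def fenceBlack : Fin 6 ⊕ Fin 6 → Fin 6 ⊕ Fin 6 → Prop
  | inl i, inl j | inr i, inr j => j = i + 1 ∨ i = j + 1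
  | inl i, inr j | inr j, inl i => i = 5 ∧ j = 0

def fenceRed : Fin 6 ⊕ Fin 6 → Fin 6 ⊕ Fin 6 → Prop
  | inl i, inr j | inr j, inl i => j = i ∨ (j : ℕ) = i + 1
  | inl _, inl _ | inr _, inr _ => False

instance : DecidableRel fenceBlack := fun p q => by
  cases p <;> cases q <;> unfold fenceBlack <;> infer_instance

instance : DecidableRel fenceRed := fun p q => by
  cases p <;> cases q <;> unfold fenceRed <;> infer_instance

def FenceMergeRedWitness (i j : Fin 6) (z : Fin 6 ⊕ Fin 6) : Prop :=
  z ≠ inl i ∧ z ≠ inr j ∧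
    ((fenceBlack (inl i) z ∨ fenceRed (inl i) z) ∨ (fenceBlack (inr j) z ∨ fenceRed (inr j) z)) ∧
    (¬ fenceBlack (inl i) z ∨ ¬ fenceBlack (inr j) z)

instance (i j : Fin 6) : DecidablePred (FenceMergeRedWitness i j) := fun _ => by
  unfold FenceMergeRedWitness; infer_instance

theorem three_le_card_fenceMergeRedWitness (i j : Fin 6) :
    3 ≤ (Finset.univ.filter (FenceMergeRedWitness i j)).card := by
  revert i j; decide

theorem sumElim_mem_fenceSet {V : Type} {a b : Fin 6 → V} (p : Fin 6 ⊕ Fin 6) :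
    Sum.elim a b p ∈ fenceSet a b := by
  rw [fenceSet, ← Set.Sum.elim_range]; exact Set.mem_range_self p

namespace FenceAttached

variable {V : Type} {G : Trigraph V} {a b : Fin 6 → V} {S X : Set V}

theorem injective_sumElim (hF : FenceAttached G a b S X) : Function.Injective (Sum.elim a b) :=
  hF.a_inj.sumElim hF.b_inj hF.ab_ne

theorem black_adj_iff (hF : FenceAttached G a b S X) (p q : Fin 6 ⊕ Fin 6) :
    G.black.Adj (Sum.elim a b p) (Sum.elim a b q) ↔ fenceBlack p q := by
  cases p <;> cases q
  exacts [hF.black_aa _ _, hF.black_ab _ _, G.black.adj_comm _ _ |>.trans (hF.black_ab _ _),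
    hF.black_bb _ _]

theorem red_adj_iff (hF : FenceAttached G a b S X) (p q : Fin 6 ⊕ Fin 6) :
    G.red.Adj (Sum.elim a b p) (Sum.elim a b q) ↔ fenceRed p q := by
  cases p <;> cases q
  exacts [iff_false_intro (hF.red_aa _ _), hF.red_ab _ _,
    G.red.adj_comm _ _ |>.trans (hF.red_ab _ _), iff_false_intro (hF.red_bb _ _)]

theorem totAdj_iff (hF : FenceAttached G a b S X) (p q : Fin 6 ⊕ Fin 6) :
    G.TotAdj (Sum.elim a b p) (Sum.elim a b q) ↔ fenceBlack p q ∨ fenceRed p q :=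
  or_congr (hF.black_adj_iff p q) (hF.red_adj_iff p q)

variable {P : Setoid V}

theorem r_iff_of_separated (hF : FenceAttached G a b S X)
    (hsep : ∀ x ∈ fenceSet a b, ∀ y ∈ fenceSet a b, P.r x y → x = y) (p q : Fin 6 ⊕ Fin 6) :
    P.r (Sum.elim a b p) (Sum.elim a b q) ↔ p = q := by
  refine ⟨fun h => hF.injective_sumElim ?_, fun h => h ▸ P.refl _⟩
  exact hsep _ (sumElim_mem_fenceSet p) _ (sumElim_mem_fenceSet q) h

theorem quot_mergeSetoid_red_adj (hF : FenceAttached G a b S X)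
    (hsep : ∀ x ∈ fenceSet a b, ∀ y ∈ fenceSet a b, P.r x y → x = y) {i j : Fin 6}
    {z : Fin 6 ⊕ Fin 6} (hz : FenceMergeRedWitness i j z) :
    (G.quot (mergeSetoid P (a i) (b j))).red.Adj
      (Quotient.mk (mergeSetoid P (a i) (b j)) (a i))
      (Quotient.mk (mergeSetoid P (a i) (b j)) (Sum.elim a b z)) := by
  obtain ⟨hzi, hzj, hadj, hnblack⟩ := hz
  refine G.quot_mergeSetoid_red_adj ((hF.r_iff_of_separated hsep (inl i) z).not.mpr hzi.symm)
    ((hF.r_iff_of_separated hsep (inr j) z).not.mpr hzj.symm) ?_ ?_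
  · rwa [← hF.totAdj_iff, ← hF.totAdj_iff] at hadj
  · rwa [← hF.black_adj_iff, ← hF.black_adj_iff] at hnblack

theorem injOn_mk_mergeSetoid (hF : FenceAttached G a b S X)
    (hsep : ∀ x ∈ fenceSet a b, ∀ y ∈ fenceSet a b, P.r x y → x = y) (i j : Fin 6) :
    Set.InjOn (fun z => Quotient.mk (mergeSetoid P (a i) (b j)) (Sum.elim a b z))
      {z | FenceMergeRedWitness i j z} := by
  intro z _ z' hz' h
  by_contra hne
  have hr := hF.r_iff_of_separated hsep
  exact mk_mergeSetoid_ne ((hr z z').not.mpr hne) ((hr (inl i) z').not.mpr hz'.1.symm)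
    ((hr (inr j) z').not.mpr hz'.2.1.symm) h

end FenceAttached

theorem fence_cross_contraction_red_to_three_fence_parts_general {V : Type}
    (G : Trigraph V) (a b : Fin 6 → V) (S X : Set V)
    (hF : FenceAttached G a b S X)
    (P : Setoid V)
    -- before this contraction, no part contains two vertices of `V(F)`
    (hsep : ∀ x ∈ fenceSet a b, ∀ y ∈ fenceSet a b, P.r x y → x = y)
    (x y : V)
    -- the contraction involves some `a_i ∈ A` and some `b_j ∈ B`
    (hxy : ∃ i j : Fin 6, x = a i ∧ y = b j) :
    3 ≤ Set.ncard {w : Quotient (Trigraph.mergeSetoid P x y) |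
        (G.quot (Trigraph.mergeSetoid P x y)).red.Adj
          (Quotient.mk (Trigraph.mergeSetoid P x y) x) w ∧
        ∃ z ∈ fenceSet a b, Quotient.mk (Trigraph.mergeSetoid P x y) z = w} := by
  obtain ⟨i, j, rfl, rfl⟩ := hxy
  set part := fun z => Quotient.mk (mergeSetoid P (a i) (b j)) (Sum.elim a b z)
  calc 3 ≤ (Finset.univ.filter (FenceMergeRedWitness i j)).card :=
        three_le_card_fenceMergeRedWitness i j
    _ = (part '' {z | FenceMergeRedWitness i j z}).ncard := by
        rw [(hF.injOn_mk_mergeSetoid hsep i j).ncard_image, ← Set.ncard_coe_finset]; simp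
    _ ≤ _ := Set.ncard_le_ncard ?_ ((Set.finite_range part).subset ?_)
  · rintro _ ⟨z, hz, rfl⟩
    exact ⟨hF.quot_mergeSetoid_red_adj hsep hz, _, sumElim_mem_fenceSet z, rfl⟩
  · rintro _ ⟨-, v, hv, rfl⟩
    rw [fenceSet, ← Set.Sum.elim_range] at hv
    obtain ⟨z, rfl⟩ := hv
    exact ⟨z, rfl⟩

theorem fence_cross_contraction_red_to_three_fence_parts {V : Type} [Fintype V]
    (G : Trigraph V) (a b : Fin 6 → V) (S X : Set V)
    (hF : FenceAttached G a b S X)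
    (L : List (Setoid V)) (P : Setoid V)
    (hL : Trigraph.IsPartialContractionSeq L) (hP : L.getLast? = some P)
    -- before this contraction, no part contains two vertices of `V(F)`
    (hsep : ∀ x ∈ fenceSet a b, ∀ y ∈ fenceSet a b, P.r x y → x = y)
    (x y : V) (hne : ¬ P.r x y)
    -- the contraction involves some `a_i ∈ A` and some `b_j ∈ B`
    (hxy : ∃ i j : Fin 6, x = a i ∧ y = b j) :
    3 ≤ Set.ncard {w : Quotient (Trigraph.mergeSetoid P x y) |
        (G.quot (Trigraph.mergeSetoid P x y)).red.Adj
          (Quotient.mk (Trigraph.mergeSetoid P x y) x) w ∧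
        ∃ z ∈ fenceSet a b, Quotient.mk (Trigraph.mergeSetoid P x y) z = w} :=
  fence_cross_contraction_red_to_three_fence_parts_general G a b S X hF P hsep x y hxy
end

section
/- Let G be a trigraph containing a family of pairwise disjoint vertical sets connected by propagation gadgets, with every fence gadget of a vertical set satisfying the attachment rule in G (for each arc from V^j to V^{j'}, the vertex x^{j'} lies in the set X of the fence of V^j and y^{j'} lies in its set Y, and the propagation digraph D(G) records one vertex per vertical set and one arc per propagation gadget). Then in any partial 4-sequence from G, any contraction involving a pair of vertices of a vertical set V can only occur at a moment when, for every vertical set V' from which there is a directed path to V in D(G), the vertical pair of V' lies in a common part (i.e., has already been contracted, possibly by that very contraction). -/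
open Trigraph

/-- The 14 vertices of a vertical set: the vertical pair `x, y` together with the
12 vertices of the fence gadget attached to `{x, y}`. -/
def verticalSet {V : Type} (x y : V) (a b : Fin 6 → V) : Set V :=
  {x, y} ∪ fenceSet a b

/-!
Along a partial 4-sequence the following is maintained: whenever two vertices of a vertical
set share a part, so do the vertical pairs of all its ancestors. Consider the contraction
that first puts two vertices of a vertical set `V^i` into a common part. A finite check on
the fence pattern shows that for any pair of its 14 vertices other than `x^i, y^i`, at least
five of the others would become red neighbours; so it contracts `x^i` with `y^i`. For an arc
`V^c → V^i`, `x^i` is black-adjacent to all twelve fence vertices of `V^c` and `y^i` to none;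
were these twelve still in distinct parts, at most two would share a part with `x^i` or
`y^i`, and the other ten would become red neighbours. So `V^c` was touched earlier, and the
invariant for `V^c` covers the ancestors of `V^i`.
-/

namespace Trigraph

variable {V : Type}

section Merge

variable {P : Setoid V} {u v : V}

lemma mergeSetoid_r_of_r {p q : V} (h : P.r p q) : (mergeSetoid P u v).r p q := Or.inl h

lemma mergeSetoid_r_of_r_of_r {f g : V} (hfu : P.r f u) (hgv : P.r g v) :
    (mergeSetoid P u v).r f g :=
  Or.inr (Or.inl ⟨hfu, P.iseqv.symm hgv⟩)

lemma mergeSetoid_r_self : (mergeSetoid P u v).r u v :=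
  mergeSetoid_r_of_r_of_r (P.iseqv.refl u) (P.iseqv.refl v)

lemma mergeSetoid_comm (P : Setoid V) (u v : V) :
    mergeSetoid P u v = mergeSetoid P v u :=
  Setoid.ext fun _ _ => or_congr_right or_comm

lemma mergeSetoid_eq_of_r {f g : V} (hfu : P.r f u) (hgv : P.r g v) :
    mergeSetoid P u v = mergeSetoid P f g := by
  have right : ∀ {p u f}, P.r f u → (P.r p u ↔ P.r p f) := fun hfu =>
    ⟨fun h => P.iseqv.trans h (P.iseqv.symm hfu), fun h => P.iseqv.trans h hfu⟩
  have left : ∀ {p u f}, P.r f u → (P.r u p ↔ P.r f p) := fun hfu =>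
    ⟨fun h => P.iseqv.trans hfu h, fun h => P.iseqv.trans (P.iseqv.symm hfu) h⟩
  refine Setoid.ext fun p q => ?_
  change (P.r p q ∨ (P.r p u ∧ P.r v q) ∨ (P.r p v ∧ P.r u q)) ↔
    (P.r p q ∨ (P.r p f ∧ P.r g q) ∨ (P.r p g ∧ P.r f q))
  rw [right hfu, right hgv, left hfu, left hgv]

lemma mergeSetoid_eq_of_r_of_not_r {f g : V} (h : (mergeSetoid P u v).r f g)
    (hfg : ¬ P.r f g) : mergeSetoid P u v = mergeSetoid P f g := by
  rcases h with h | ⟨hfu, hvg⟩ | ⟨hfv, hug⟩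
  · exact absurd h hfg
  · exact mergeSetoid_eq_of_r hfu (P.iseqv.symm hvg)
  · rw [mergeSetoid_comm]; exact mergeSetoid_eq_of_r hfv (P.iseqv.symm hug)

end Merge

/-- Once `f` and `g` are contracted, the edge from their part to `w` (outside it) is red. -/
def Mixed (G : Trigraph V) (f g w : V) : Prop :=
  (G.TotAdj f w ∨ G.TotAdj g w) ∧ (¬ G.black.Adj f w ∨ ¬ G.black.Adj g w)

variable {G : Trigraph V} {P : Setoid V} {f g : V}

lemma red_adj_quot_mergeSetoid {w : V} (hwf : ¬ P.r w f) (hwg : ¬ P.r w g)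
    (hmix : G.Mixed f g w) :
    (G.quot (mergeSetoid P f g)).red.Adj (Quotient.mk _ f) (Quotient.mk _ w) := by
  set Q := mergeSetoid P f g
  have hf : Q.r f f := Q.iseqv.refl f
  have hg : Q.r g f := Q.iseqv.symm mergeSetoid_r_self
  refine ⟨fun h => ?_, fun hall => ?_, ?_⟩
  · rcases (Quotient.exact h : Q.r f w) with h | ⟨-, h⟩ | ⟨-, h⟩
    · exact hwf (P.iseqv.symm h)
    · exact hwg (P.iseqv.symm h)
    · exact hwf (P.iseqv.symm h)
  · rcases hmix.2 with h | h
    · exact h (hall f w (Quotient.sound hf) rfl)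
    · exact h (hall g w (Quotient.sound hg) rfl)
  · rcases hmix.1 with h | h
    · exact ⟨f, w, Quotient.sound hf, rfl, h⟩
    · exact ⟨g, w, Quotient.sound hg, rfl, h⟩

lemma RedDegLE.ncard_le_of_mergeSetoid [Finite V] {d : ℕ}
    (hdeg : (G.quot (mergeSetoid P f g)).RedDegLE d) {W : Set V}
    (hW : W.InjOn (Quotient.mk P)) (hout : ∀ w ∈ W, ¬ P.r w f ∧ ¬ P.r w g)
    (hmix : ∀ w ∈ W, G.Mixed f g w) : W.ncard ≤ d := by
  set Q := mergeSetoid P f g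
  have hinj : W.InjOn (Quotient.mk Q) := by
    intro w hw w' hw' h
    rcases (Quotient.exact h : Q.r w w') with h | ⟨h, -⟩ | ⟨h, -⟩
    · exact hW hw hw' (Quotient.sound h)
    · exact absurd h (hout w hw).1
    · exact absurd h (hout w hw).2
  have hsub : Quotient.mk Q '' W ⊆ (G.quot Q).red.neighborSet (Quotient.mk Q f) := by
    rintro _ ⟨w, hw, rfl⟩
    exact red_adj_quot_mergeSetoid (hout w hw).1 (hout w hw).2 (hmix w hw)
  calc W.ncard = (Quotient.mk Q '' W).ncard := hinj.ncard_image.symm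
    _ ≤ _ := Set.ncard_le_ncard hsub
    _ ≤ d := hdeg _

lemma IsPartialSeq.forall_mem {d : ℕ} {L : List (Setoid V)} (hL : G.IsPartialSeq d L)
    (p : Setoid V → Prop) (hbot : p ⊥)
    (hstep : ∀ P u v, ¬ P.r u v → (G.quot (mergeSetoid P u v)).RedDegLE d → p P →
      p (mergeSetoid P u v)) :
    ∀ P ∈ L, p P := by
  obtain ⟨⟨hhead, hchain⟩, hdeg⟩ := hL
  have hchain' : L.IsChain fun P Q => MergeStep P Q ∧ (G.quot Q).RedDegLE d :=
    List.IsChain.imp_of_mem_imp (fun _ Q _ hQ h => ⟨h, hdeg Q hQ⟩) hchain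
  refine hchain'.induction p L ?_ fun hne => ?_
  · rintro P _ ⟨⟨u, v, huv, rfl⟩, hQ⟩ hP
    exact hstep P u v huv hQ hP
  · rwa [Option.some.inj ((List.head?_eq_some_head hne).symm.trans hhead)]

end Trigraph

lemma Set.InjOn.ncard_le_ncard_sep_add_two {V : Type} [Finite V] {P : Setoid V} {s : Set V}
    (hs : s.InjOn (Quotient.mk P)) (f g : V) :
    s.ncard ≤ {w ∈ s | ¬ P.r w f ∧ ¬ P.r w g}.ncard + 2 := by
  have hpart : ∀ z, {w ∈ s | P.r w z}.ncard ≤ 1 := fun z =>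
    (Set.ncard_le_one_iff).mpr fun hw hw' =>
      hs hw.1 hw'.1 (Quotient.sound (P.iseqv.trans hw.2 (P.iseqv.symm hw'.2)))
  have hcover : s ⊆ {w ∈ s | ¬ P.r w f ∧ ¬ P.r w g} ∪ {w ∈ s | P.r w f} ∪
      {w ∈ s | P.r w g} := by
    intro w hw
    by_cases hf : P.r w f
    · exact Or.inl (Or.inr ⟨hw, hf⟩)
    by_cases hg : P.r w g
    · exact Or.inr ⟨hw, hg⟩
    · exact Or.inl (Or.inl ⟨hw, hf, hg⟩)
  calc s.ncard ≤ _ := Set.ncard_le_ncard hcover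
    _ ≤ _ := Set.ncard_union_le _ _
    _ ≤ _ := Nat.add_le_add (Set.ncard_union_le _ _) (hpart g)
    _ ≤ _ := by have := hpart f; omega

namespace FenceAttached

variable {V : Type} {G : Trigraph V} {a b : Fin 6 → V} {S X : Set V}

lemma ncard_fenceSet (hF : FenceAttached G a b S X) : (fenceSet a b).ncard = 12 := by
  have hdisj : Disjoint (Set.range a) (Set.range b) :=
    Set.disjoint_left.mpr fun _ ⟨i, hi⟩ ⟨j, hj⟩ => hF.ab_ne i j (hi.trans hj.symm)
  rw [fenceSet, Set.ncard_union_eq hdisj, Set.ncard_range_of_injective hF.a_inj,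
    Set.ncard_range_of_injective hF.b_inj, Nat.card_fin]

lemma not_redDegLE_mergeSetoid [Finite V] (hF : FenceAttached G a b S X) {P : Setoid V}
    (hsep : (fenceSet a b).InjOn (Quotient.mk P)) {x' y' : V} (hx' : x' ∈ X)
    (hy' : y' ∉ fenceSet a b ∪ S ∪ X) : ¬ (G.quot (mergeSetoid P x' y')).RedDegLE 4 := by
  intro hdeg
  have hx'F : x' ∉ fenceSet a b := fun h => hF.X_disj x' hx' (Or.inl h)
  have hy'F : y' ∉ fenceSet a b := fun h => hy' (Or.inl (Or.inl h))
  have hmix : ∀ w ∈ fenceSet a b, G.Mixed x' y' w := by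
    rintro w (⟨i, rfl⟩ | ⟨i, rfl⟩)
    · refine ⟨Or.inl (Or.inl ((hF.black_a_out i x' hx'F).mpr (Or.inl hx')).symm),
        Or.inr fun h => ?_⟩
      rcases (hF.black_a_out i y' hy'F).mp h.symm with h | h
      · exact hy' (Or.inr h)
      · exact hy' (Or.inl (Or.inr h))
    · exact ⟨Or.inl (Or.inl ((hF.black_b_out i x' hx'F).mpr hx').symm),
        Or.inr fun h => hy' (Or.inr ((hF.black_b_out i y' hy'F).mp h.symm))⟩
  have hle := hdeg.ncard_le_of_mergeSetoid (hsep.mono (Set.sep_subset _ _))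
    (fun w hw => hw.2) (fun w hw => hmix w hw.1)
  have hlost := hsep.ncard_le_ncard_sep_add_two x' y'
  have := hF.ncard_fenceSet
  omega

end FenceAttached

abbrev VerticalIndex := (Fin 6 ⊕ Fin 6) ⊕ Bool

def verticalVertex {V : Type} (x y : V) (a b : Fin 6 → V) : VerticalIndex → V
  | .inl (.inl i) => a i
  | .inl (.inr i) => b i
  | .inr false => x
  | .inr true => y

lemma verticalVertex_inr_mem {V : Type} (x y : V) (a b : Fin 6 → V) (c : Bool) :
    verticalVertex x y a b (.inr c) ∈ ({x, y} : Set V) := by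
  cases c <;> simp [verticalVertex]

/-- The adjacencies inside a vertical set forced by the attachment rule of its fence; the
pair `x, y` is left open. -/
def patternAdj : VerticalIndex → VerticalIndex → Bool
  | .inl (.inl i), .inl (.inl j) => decide (j = i + 1 ∨ i = j + 1)
  | .inl (.inr i), .inl (.inr j) => decide (j = i + 1 ∨ i = j + 1)
  | .inl (.inl i), .inl (.inr j) => decide ((i = 5 ∧ j = 0) ∨ j = i ∨ (j : ℕ) = i + 1)
  | .inr _, .inl (.inl _) => true
  | _, _ => false

/-- The black non-adjacencies inside a vertical set forced by the attachment rule. -/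
def patternNonBlack : VerticalIndex → VerticalIndex → Bool
  | .inl (.inl i), .inl (.inl j) => decide ¬ (j = i + 1 ∨ i = j + 1)
  | .inl (.inr i), .inl (.inr j) => decide ¬ (j = i + 1 ∨ i = j + 1)
  | .inl (.inl i), .inl (.inr j) => decide ¬ (i = 5 ∧ j = 0)
  | .inr _, .inl (.inr _) => true
  | _, _ => false

def patternMixed (p q w : VerticalIndex) : Bool :=
  (patternAdj p w || patternAdj w p || patternAdj q w || patternAdj w q) &&
    (patternNonBlack p w || patternNonBlack w p || patternNonBlack q w || patternNonBlack w q)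

lemma five_le_card_patternMixed :
    ∀ p q : VerticalIndex, p ≠ q → ¬ (p.isRight ∧ q.isRight) →
    5 ≤ (Finset.univ.filter fun w => w ≠ p ∧ w ≠ q ∧ patternMixed p q w).card := by
  decide

lemma range_verticalVertex {V : Type} (x y : V) (a b : Fin 6 → V) :
    Set.range (verticalVertex x y a b) = verticalSet x y a b := by
  ext z
  constructor
  · rintro ⟨(i | i) | _ | _, rfl⟩
    exacts [Or.inr (Or.inl ⟨i, rfl⟩), Or.inr (Or.inr ⟨i, rfl⟩), Or.inl (Or.inl rfl),
      Or.inl (Or.inr rfl)]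
  · rintro ((rfl | rfl) | ⟨i, rfl⟩ | ⟨i, rfl⟩)
    exacts [⟨.inr false, rfl⟩, ⟨.inr true, rfl⟩, ⟨.inl (.inl i), rfl⟩,
      ⟨.inl (.inr i), rfl⟩]

namespace FenceAttached

variable {V : Type} {G : Trigraph V} {x y : V} {a b : Fin 6 → V} {X : Set V}

lemma verticalVertex_injective (hxy : x ≠ y) (hF : FenceAttached G a b {x, y} X) :
    (verticalVertex x y a b).Injective := by
  have ha : ∀ i, a i ≠ x ∧ a i ≠ y := fun i =>
    ⟨fun h => hF.S_disj x (by simp) (h ▸ Or.inl ⟨i, rfl⟩),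
      fun h => hF.S_disj y (by simp) (h ▸ Or.inl ⟨i, rfl⟩)⟩
  have hb : ∀ i, b i ≠ x ∧ b i ≠ y := fun i =>
    ⟨fun h => hF.S_disj x (by simp) (h ▸ Or.inr ⟨i, rfl⟩),
      fun h => hF.S_disj y (by simp) (h ▸ Or.inr ⟨i, rfl⟩)⟩
  rintro ((i | i) | _ | _) ((j | j) | _ | _) h <;> simp only [verticalVertex] at h
  all_goals first
    | rfl
    | rw [hF.a_inj h]
    | rw [hF.b_inj h]
    | exact absurd h (hF.ab_ne _ _)
    | exact absurd h.symm (hF.ab_ne _ _)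
    | exact absurd h hxy
    | exact absurd h.symm hxy
    | exact absurd h (ha _).1 | exact absurd h (ha _).2
    | exact absurd h.symm (ha _).1 | exact absurd h.symm (ha _).2
    | exact absurd h (hb _).1 | exact absurd h (hb _).2
    | exact absurd h.symm (hb _).1 | exact absurd h.symm (hb _).2

lemma totAdj_of_patternAdj (hF : FenceAttached G a b {x, y} X) {p q : VerticalIndex}
    (h : patternAdj p q = true) :
    G.TotAdj (verticalVertex x y a b p) (verticalVertex x y a b q) := by
  rcases p with (i | i) | c <;> rcases q with (j | j) | d <;>
    simp only [patternAdj, decide_eq_true_eq, reduceCtorEq] at h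
  · exact Or.inl ((hF.black_aa i j).mpr h)
  · rcases h with h | h
    · exact Or.inl ((hF.black_ab i j).mpr h)
    · exact Or.inr ((hF.red_ab i j).mpr h)
  · exact Or.inl ((hF.black_bb i j).mpr h)
  · have hS := verticalVertex_inr_mem x y a b c
    exact Or.inl ((hF.black_a_out j _ (hF.S_disj _ hS)).mpr (Or.inr hS)).symm

lemma not_black_of_patternNonBlack (hF : FenceAttached G a b {x, y} X) {p q : VerticalIndex}
    (h : patternNonBlack p q = true) :
    ¬ G.black.Adj (verticalVertex x y a b p) (verticalVertex x y a b q) := by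
  rcases p with (i | i) | c <;> rcases q with (j | j) | d <;>
    simp only [patternNonBlack, decide_eq_true_eq, reduceCtorEq] at h
  · exact fun hB => h ((hF.black_aa i j).mp hB)
  · exact fun hB => h ((hF.black_ab i j).mp hB)
  · exact fun hB => h ((hF.black_bb i j).mp hB)
  · have hS := verticalVertex_inr_mem x y a b c
    exact fun hB => hF.X_disj _ ((hF.black_b_out j _ (hF.S_disj _ hS)).mp hB.symm) (Or.inr hS)

lemma mixed_of_patternMixed (hF : FenceAttached G a b {x, y} X) {p q w : VerticalIndex}
    (h : patternMixed p q w = true) :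
    G.Mixed (verticalVertex x y a b p) (verticalVertex x y a b q) (verticalVertex x y a b w) := by
  simp only [patternMixed, Bool.and_eq_true, Bool.or_eq_true] at h
  obtain ⟨hadj, hnb⟩ := h
  have adj := fun {p q} (h : patternAdj p q = true) => hF.totAdj_of_patternAdj h
  have nb := fun {p q} (h : patternNonBlack p q = true) => hF.not_black_of_patternNonBlack h
  refine ⟨?_, ?_⟩
  · rcases hadj with ((h | h) | h) | h
    exacts [Or.inl (adj h), Or.inl (G.totAdj_symm (adj h)), Or.inr (adj h),
      Or.inr (G.totAdj_symm (adj h))]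
  · rcases hnb with ((h | h) | h) | h
    exacts [Or.inl (nb h), Or.inl fun hB => nb h hB.symm, Or.inr (nb h),
      Or.inr fun hB => nb h hB.symm]

lemma eq_pair_of_redDegLE_mergeSetoid [Finite V] (hxy : x ≠ y)
    (hF : FenceAttached G a b {x, y} X) {P : Setoid V}
    (hsep : (verticalSet x y a b).InjOn (Quotient.mk P)) {f g : V}
    (hf : f ∈ verticalSet x y a b) (hg : g ∈ verticalSet x y a b) (hfg : f ≠ g)
    (hdeg : (G.quot (mergeSetoid P f g)).RedDegLE 4) : (f = x ∧ g = y) ∨ (f = y ∧ g = x) := by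
  rw [← range_verticalVertex] at hsep hf hg
  obtain ⟨p, rfl⟩ := hf
  obtain ⟨q, rfl⟩ := hg
  set e := verticalVertex x y a b
  have he : e.Injective := hF.verticalVertex_injective hxy
  by_contra hne
  have hpair : ¬ (p.isRight ∧ q.isRight) := by
    rcases p with _ | _ | _ <;> rcases q with _ | _ | _ <;> simp_all [e, verticalVertex]
  set C := Finset.univ.filter fun w => w ≠ p ∧ w ≠ q ∧ patternMixed p q w
  have hout : ∀ w ∈ e '' C, ¬ P.r w (e p) ∧ ¬ P.r w (e q) := by
    rintro _ ⟨w, hw, rfl⟩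
    simp only [C, Finset.mem_coe, Finset.mem_filter, Finset.mem_univ, true_and] at hw
    exact ⟨fun h => hw.1 (he (hsep ⟨w, rfl⟩ ⟨p, rfl⟩ (Quotient.sound h))),
      fun h => hw.2.1 (he (hsep ⟨w, rfl⟩ ⟨q, rfl⟩ (Quotient.sound h)))⟩
  have hmix : ∀ w ∈ e '' C, G.Mixed (e p) (e q) w := by
    rintro _ ⟨w, hw, rfl⟩
    simp only [C, Finset.mem_coe, Finset.mem_filter, Finset.mem_univ, true_and] at hw
    exact hF.mixed_of_patternMixed hw.2.2
  have hle := hdeg.ncard_le_of_mergeSetoid (hsep.mono (Set.image_subset_range _ _)) hout hmix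
  rw [Set.ncard_image_of_injective _ he, Set.ncard_coe_finset] at hle
  have h5 : 5 ≤ C.card := five_le_card_patternMixed p q (fun h => hfg (congrArg e h)) hpair
  omega

end FenceAttached

section

variable {V ι : Type} {x y : ι → V} {a b : ι → Fin 6 → V} {Arc : ι → ι → Prop}

def AncestorPairsContracted (x y : ι → V) (a b : ι → Fin 6 → V) (Arc : ι → ι → Prop)
    (P : Setoid V) : Prop :=
  ∀ i, ¬ (verticalSet (x i) (y i) (a i) (b i)).InjOn (Quotient.mk P) →
    ∀ j, Relation.ReflTransGen Arc j i → P.r (x j) (y j)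

lemma ancestorPairsContracted_bot : AncestorPairsContracted x y a b Arc ⊥ :=
  fun _ hi => absurd (fun _ _ _ _ h => Quotient.exact h) hi

lemma AncestorPairsContracted.merge [Finite V] {G : Trigraph V} {X : ι → Set V}
    (hxy : ∀ i, x i ≠ y i) (hF : ∀ i, FenceAttached G (a i) (b i) {x i, y i} (X i))
    (harc : ∀ i j, Arc i j →
      x j ∈ X i ∧ y j ∉ fenceSet (a i) (b i) ∪ {x i, y i} ∪ X i)
    {P : Setoid V} (hI : AncestorPairsContracted x y a b Arc P) {u v : V}
    (hdeg : (G.quot (mergeSetoid P u v)).RedDegLE 4) :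
    AncestorPairsContracted x y a b Arc (mergeSetoid P u v) := by
  intro i hi j hji
  by_cases hsep : (verticalSet (x i) (y i) (a i) (b i)).InjOn (Quotient.mk P)
  swap
  · exact mergeSetoid_r_of_r (hI i hsep j hji)
  obtain ⟨f, hf, g, hg, hQfg, hfg⟩ : ∃ f ∈ verticalSet (x i) (y i) (a i) (b i),
      ∃ g ∈ verticalSet (x i) (y i) (a i) (b i), (mergeSetoid P u v).r f g ∧ f ≠ g := by
    simpa [Set.InjOn, Quotient.eq] using hi
  rw [mergeSetoid_eq_of_r_of_not_r hQfg fun h => hfg (hsep hf hg (Quotient.sound h))] at hdeg ⊢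
  have hpair : mergeSetoid P f g = mergeSetoid P (x i) (y i) := by
    rcases (hF i).eq_pair_of_redDegLE_mergeSetoid (hxy i) hsep hf hg hfg hdeg with
      ⟨rfl, rfl⟩ | ⟨rfl, rfl⟩
    · rfl
    · exact mergeSetoid_comm P _ _
  rw [hpair] at hdeg ⊢
  rcases hji.cases_tail with rfl | ⟨c, hjc, hci⟩
  · exact mergeSetoid_r_self
  · have hc : ¬ (verticalSet (x c) (y c) (a c) (b c)).InjOn (Quotient.mk P) := fun hc =>
      (hF c).not_redDegLE_mergeSetoid (hc.mono Set.subset_union_right) (harc c i hci).1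
        (harc c i hci).2 hdeg
    exact mergeSetoid_r_of_r (hI c hc j hjc)

end

theorem wire_forces_all_ancestor_contractions_general {V : Type} [Fintype V] (G : Trigraph V)
    {ι : Type}
    -- a family of pairwise disjoint vertical sets …
    (x y : ι → V) (a b : ι → Fin 6 → V) (X : ι → Set V)
    -- … connected by propagation gadgets recorded by the propagation digraph `Arc`
    (Arc : ι → ι → Prop)
    (hxy : ∀ i, x i ≠ y i)
    (hF : ∀ i, FenceAttached G (a i) (b i) {x i, y i} (X i))
    -- for each arc from `V^i` to `V^j`, the vertex `x^j` lies in the set `X` of the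
    -- fence of `V^i` and `y^j` lies in its set `Y`
    (harc : ∀ i j, Arc i j → x j ∈ X i ∧
        y j ∉ fenceSet (a i) (b i) ∪ {x i, y i} ∪ X i)
    (L : List (Setoid V)) (P Q : Setoid V) (u v : V) (huv : ¬ P.r u v)
    (hQ : Q = Trigraph.mergeSetoid P u v)
    (hL : G.IsPartialSeq 4 (L ++ [Q]))
    (k : ι)
    -- the contraction from `P` to `Q` involves a pair of vertices of `V^k`
    (hinv : ∃ f ∈ verticalSet (x k) (y k) (a k) (b k),
            ∃ g ∈ verticalSet (x k) (y k) (a k) (b k),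
        (P.r f u ∧ P.r g v) ∨ (P.r f v ∧ P.r g u)) :
    -- then for every vertical set `V^i` with a directed path to `V^k` in the
    -- propagation digraph, the vertical pair of `V^i` lies in a common part
    -- (possibly merged by this very contraction)
    ∀ i, Relation.ReflTransGen Arc i k → Q.r (x i) (y i) := by
  have hI : AncestorPairsContracted x y a b Arc Q :=
    hL.forall_mem _ ancestorPairsContracted_bot
      (fun _ _ _ _ hdeg h => h.merge hxy hF harc hdeg) Q List.mem_concat_self
  subst hQ
  obtain ⟨f, hf, g, hg, hfg⟩ := hinv
  refine hI k fun hsep => huv ?_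
  rcases hfg with ⟨hfu, hgv⟩ | ⟨hfv, hgu⟩
  · obtain rfl := hsep hf hg (Quotient.sound (mergeSetoid_r_of_r_of_r hfu hgv))
    exact P.iseqv.trans (P.iseqv.symm hfu) hgv
  · obtain rfl := hsep hf hg
      (Quotient.sound (mergeSetoid_comm P u v ▸ mergeSetoid_r_of_r_of_r hfv hgu))
    exact P.iseqv.trans (P.iseqv.symm hgu) hfv

theorem wire_forces_all_ancestor_contractions {V : Type} [Fintype V] (G : Trigraph V)
    {ι : Type}
    -- a family of pairwise disjoint vertical sets …
    (x y : ι → V) (a b : ι → Fin 6 → V) (X : ι → Set V)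
    -- … connected by propagation gadgets recorded by the propagation digraph `Arc`
    (Arc : ι → ι → Prop)
    (hxy : ∀ i, x i ≠ y i)
    (hF : ∀ i, FenceAttached G (a i) (b i) {x i, y i} (X i))
    (hdisj : ∀ i j, i ≠ j → Disjoint (verticalSet (x i) (y i) (a i) (b i))
        (verticalSet (x j) (y j) (a j) (b j)))
    -- for each arc from `V^i` to `V^j`, the vertex `x^j` lies in the set `X` of the
    -- fence of `V^i` and `y^j` lies in its set `Y`
    (harc : ∀ i j, Arc i j → x j ∈ X i ∧
        y j ∉ fenceSet (a i) (b i) ∪ {x i, y i} ∪ X i)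
    (L : List (Setoid V)) (P Q : Setoid V) (u v : V) (huv : ¬ P.r u v)
    (hQ : Q = Trigraph.mergeSetoid P u v)
    (hL : G.IsPartialSeq 4 (L ++ [Q])) (hP : L.getLast? = some P)
    (k : ι)
    -- the contraction from `P` to `Q` involves a pair of vertices of `V^k`
    (hinv : ∃ f ∈ verticalSet (x k) (y k) (a k) (b k),
            ∃ g ∈ verticalSet (x k) (y k) (a k) (b k),
        (P.r f u ∧ P.r g v) ∨ (P.r f v ∧ P.r g u)) :
    -- then for every vertical set `V^i` with a directed path to `V^k` in the
    -- propagation digraph, the vertical pair of `V^i` lies in a common part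
    -- (possibly merged by this very contraction)
    ∀ i, Relation.ReflTransGen Arc i k → Q.r (x i) (y i) :=
  wire_forces_all_ancestor_contractions_general G x y a b X Arc hxy hF harc L P Q u v huv hQ hL k
    hinv
end
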